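/- The left-hand distributive law r;(s+t)=r;s+r;t is independent of the axiom set (R1)-(R6), (R8), (R9), (R10): in the algebra A7 on a Boolean algebra with at least four elements, with 1' an atom, r;s = r if s=1' and 0 otherwise, and converse the identity, all of (R1)-(R6), (R8)-(R10) hold, but r;(1'+0') = r;1 = 0 ≠ r = r;1' + r;0' for any nonzero r different from 1 with 0' := -1'. -/

import Mathlib

/-! Composition in A7 only sees whether its right argument is `1'`. Since `1'` is an atom of an
algebra with more than two elements, `1' ≠ 1`, so `r ; (1' + 0') = r ; 1 = 0`, whereas
`r ; 1' + r ; 0' = r`. -/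

theorem compl_sup_compl_sup_compl_sup_compl_compl {A : Type*} [BooleanAlgebra A] (r s : A) :
    (rᶜ ⊔ s)ᶜ ⊔ (rᶜ ⊔ sᶜ)ᶜ = r := by
  rw [compl_sup, compl_sup, compl_compl, compl_compl, sup_comm, sup_inf_inf_compl]

theorem IsAtom.ne_top_of_three_ne {A : Type*} [PartialOrder A] [BoundedOrder A] {e : A}
    (he : IsAtom e) {a b c : A} (hab : a ≠ b) (hac : a ≠ c) (hbc : b ≠ c) : e ≠ ⊤ := by
  rintro rfl
  have := isSimpleOrder_iff_isAtom_top.2 he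
  rcases IsSimpleOrder.eq_bot_or_eq_top a with rfl | rfl <;>
    rcases IsSimpleOrder.eq_bot_or_eq_top b with rfl | rfl <;>
    rcases IsSimpleOrder.eq_bot_or_eq_top c with rfl | rfl <;> simp_all

namespace A7

/-- The composition `r ; s` of Tarski's algebra A7, whose identity element `1'` is `e`. -/
def mul {A : Type*} [Bot A] [DecidableEq A] (e r s : A) : A := if s = e then r else ⊥

section
variable {A : Type*} [DecidableEq A]

theorem mul_assoc [Bot A] {e : A} (he : e ≠ ⊥) (r s t : A) :
    mul e r (mul e s t) = mul e (mul e r s) t := by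
  by_cases ht : t = e <;> simp [mul, ht, he.symm]

theorem mul_unit [Bot A] (e r : A) : mul e r e = r := if_pos rfl

theorem mul_top [Bot A] [Top A] {e : A} (he : e ≠ ⊤) (r : A) : mul e r ⊤ = ⊥ :=
  if_neg he.symm

theorem sup_mul [SemilatticeSup A] [OrderBot A] (e r s t : A) :
    mul e (r ⊔ s) t = mul e r t ⊔ mul e s t := by
  by_cases ht : t = e <;> simp [mul, ht]

theorem mul_sup_mul_compl [BooleanAlgebra A] (e r : A) : mul e r e ⊔ mul e r eᶜ = r := by
  by_cases h : eᶜ = e <;> simp [mul, h]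

theorem mul_compl_mul_sup_compl [BooleanAlgebra A] {e : A} (he : e ≠ ⊤) (r s : A) :
    mul e r (mul e r s)ᶜ ⊔ sᶜ = sᶜ := by
  by_cases hs : s = e
  · subst hs
    by_cases hr : rᶜ = s
    · simp [mul, ← compl_eq_comm.1 hr]
    · simp [mul, hr]
  · simp [mul, hs, he.symm]

end

end A7

/-- The left-hand distributive law (R8') is independent of the axiom set
(R1)-(R6), (R8), (R9), (R10): in the algebra A7, built on a Boolean algebra
with at least four elements with 1' an atom, where r;s = r if s = 1' and
r;s = 0 otherwise, and converse is the identity, all of (R1)-(R6) and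
(R8)-(R10) hold, but (R8') fails: r;(1'+0') = r;1 = 0 ≠ r = r;1' + r;0'
for any nonzero r different from 1, where 0' = -1'. -/
theorem R8'_independent {A : Type*} [BooleanAlgebra A] [DecidableEq A]
    (h4 : ∃ a b c d : A, a ≠ b ∧ a ≠ c ∧ a ≠ d ∧ b ≠ c ∧ b ≠ d ∧ c ≠ d)
    (e : A) (he : IsAtom e) :
    let mul : A → A → A := fun r s => if s = e then r else ⊥
    (∀ r s : A, r ⊔ s = s ⊔ r) ∧
    (∀ r s t : A, r ⊔ (s ⊔ t) = (r ⊔ s) ⊔ t) ∧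
    (∀ r s : A, (rᶜ ⊔ s)ᶜ ⊔ (rᶜ ⊔ sᶜ)ᶜ = r) ∧
    (∀ r s t : A, mul r (mul s t) = mul (mul r s) t) ∧
    (∀ r : A, mul r e = r) ∧
    (∀ r : A, id (id r) = r) ∧
    (∀ r s t : A, mul (r ⊔ s) t = mul r t ⊔ mul s t) ∧
    (∀ r s : A, id (r ⊔ s) = id r ⊔ id s) ∧
    (∀ r s : A, mul (id r) (mul r s)ᶜ ⊔ sᶜ = sᶜ) ∧
    ¬ (∀ r s t : A, mul r (s ⊔ t) = mul r s ⊔ mul r t) ∧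
    (∀ r : A, r ≠ ⊥ → r ≠ ⊤ →
      mul r (e ⊔ eᶜ) = ⊥ ∧ mul r e ⊔ mul r eᶜ = r ∧ (⊥ : A) ≠ r) := by
  intro mul
  obtain ⟨a, b, c, -, hab, hac, -, hbc, -, -⟩ := h4
  have he_top : e ≠ ⊤ := he.ne_top_of_three_ne hab hac hbc
  have mul_sup_compl (r : A) : mul r (e ⊔ eᶜ) = ⊥ := by
    rw [sup_compl_eq_top]
    exact A7.mul_top he_top r
  refine ⟨sup_comm, fun r s t => (sup_assoc r s t).symm, compl_sup_compl_sup_compl_sup_compl_compl,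
    A7.mul_assoc he.1, A7.mul_unit e, fun _ => rfl, A7.sup_mul e, fun _ _ => rfl,
    A7.mul_compl_mul_sup_compl he_top, fun h_distrib => ?_,
    fun r hr _ => ⟨mul_sup_compl r, A7.mul_sup_mul_compl e r, hr.symm⟩⟩
  have h_sup : ⊥ = e := by
    rw [← mul_sup_compl e, h_distrib e e eᶜ]
    exact A7.mul_sup_mul_compl e e
  exact he.1 h_sup.symm
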